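/- The series over primes ∑_{p prime} (log p)/(p^2 − p + 1) equals −∑_{n=2}^{∞} (ζ'(n)/ζ(n)) · ∑_{d | n} (2/√3) sin((d−1)π/3) · μ(n/d), and both series converge. -/

import Mathlib

/-!
Let `b d = (2/√3) sin ((d - 1)π/3)` (`sinCoeff`) and `c = b ∗ μ` (`moebiusSinCoeff`), so that
`∑_{d ∣ M} c d = b M`. Since `-ζ'/ζ(n) = ∑_{p, k ≥ 1} log p · p^{-kn}`, the right-hand side is
the sum of `log p · c n · p^{-kn}` over primes `p`, `k ≥ 1` and `n ≥ 2`; the terms with `n = 1`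
would vanish anyway, as `c 1 = b 1 = 0`. This triple series converges absolutely. Summing it
first over `(k, n)` regroups it by `M = kn` into the Lambert series `∑_{M ≥ 1} b M p^{-M}`. The
recurrence `b (d + 2) = b (d + 1) - b d`, which comes from `cos (π/3) = 1/2`, gives
`∑_{M ≥ 1} b M y^M = y² / (1 - y + y²)`, and this equals `1 / (p² - p + 1)` at `y = 1/p`.
-/

open scoped Real

/-- The Riemann zeta function for real argument `x > 1`, `ζ(x) = ∑_{n ≥ 1} n^{-x}`. -/
noncomputable def zetaR (x : ℝ) : ℝ := ∑' n : ℕ, ((n : ℝ) + 1) ^ (-x)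

/-- The derivative of the (real) Riemann zeta function. -/
noncomputable def zetaDerivR (x : ℝ) : ℝ := deriv zetaR x

open Real
open scoped ArithmeticFunction.Moebius ArithmeticFunction.vonMangoldt

theorem HasSum.sum_divisorsAntidiagonal {α : Type*} [AddCommMonoid α] [TopologicalSpace α]
    [ContinuousAdd α] [RegularSpace α] {f : ℕ → ℕ → α} {a : α}
    (h : HasSum (fun x : ℕ+ × ℕ+ => f x.1 x.2) a) :
    HasSum (fun n : ℕ+ => ∑ x ∈ (n : ℕ).divisorsAntidiagonal, f x.1 x.2) a := by
  refine (sigmaAntidiagonalEquivProd.hasSum_iff.2 h).sigma fun n => ?_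
  convert hasSum_fintype _
  rw [← Finset.sum_attach]
  rfl

theorem hasSum_prime_pow_succ_iff {α : Type*} [AddCommMonoid α] [TopologicalSpace α]
    {f : ℕ → α} {a : α} (hf : ∀ m, ¬IsPrimePow m → f m = 0) :
    HasSum (fun pk : Nat.Primes × ℕ => f ((pk.1 : ℕ) ^ (pk.2 + 1))) a ↔ HasSum f a := by
  refine Function.Injective.hasSum_iff (g := fun pk : Nat.Primes × ℕ => (pk.1 : ℕ) ^ (pk.2 + 1))
    ?_ fun m hm => hf m fun hpow => hm ?_
  · rintro ⟨p, k⟩ ⟨q, j⟩ h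
    obtain ⟨hpq, hkj⟩ := p.2.pow_inj q.2 h
    exact Prod.ext (Subtype.ext hpq) hkj
  · obtain ⟨p, k, hp, hk, rfl⟩ := (isPrimePow_nat_iff m).1 hpow
    exact ⟨(⟨p, hp⟩, k - 1), by simp [Nat.sub_add_cancel hk]⟩

lemma ofReal_zetaR {x : ℝ} (hx : 1 < x) : (zetaR x : ℂ) = riemannZeta x := by
  rw [zeta_eq_tsum_one_div_nat_add_one_cpow (by simpa using hx), zetaR, Complex.ofReal_tsum]
  refine tsum_congr fun n => ?_
  rw [Complex.ofReal_cpow (by positivity), Complex.ofReal_neg, Complex.cpow_neg, one_div]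
  push_cast
  rfl

lemma zetaDerivR_eq_re {x : ℝ} (hx : 1 < x) : zetaDerivR x = (deriv riemannZeta x).re := by
  have hζ : HasDerivAt (fun t : ℝ => (riemannZeta t).re) (deriv riemannZeta x).re x :=
    (differentiableAt_riemannZeta (by exact_mod_cast hx.ne')).hasDerivAt.real_of_complex
  refine (hζ.congr_of_eventuallyEq ?_).deriv
  filter_upwards [lt_mem_nhds hx] with t ht
  rw [← ofReal_zetaR ht, Complex.ofReal_re]

lemma hasSum_vonMangoldt_div_rpow {x : ℝ} (hx : 1 < x) :
    HasSum (fun m : ℕ => Λ m / (m : ℝ) ^ x) (-(zetaDerivR x / zetaR x)) := by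
  have hx' : 1 < (x : ℂ).re := by simpa using hx
  have h := Complex.hasSum_re (ArithmeticFunction.LSeriesSummable_vonMangoldt hx').LSeriesHasSum
  rw [ArithmeticFunction.LSeries_vonMangoldt_eq_deriv_riemannZeta_div hx', ← ofReal_zetaR hx,
    neg_div, Complex.neg_re, Complex.div_ofReal_re, ← zetaDerivR_eq_re hx] at h
  refine h.congr_fun fun m => ?_
  rcases eq_or_ne m 0 with rfl | hm
  · simp
  · simp [LSeries.term_of_ne_zero hm, ← Complex.ofReal_natCast,
      ← Complex.ofReal_cpow m.cast_nonneg, ← Complex.ofReal_div]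

lemma hasSum_log_mul_inv_pow (n : ℕ) :
    HasSum (fun pk : Nat.Primes × ℕ => Real.log pk.1 * ((pk.1 : ℝ)⁻¹) ^ ((pk.2 + 1) * (n + 2)))
      (-(zetaDerivR (n + 2) / zetaR (n + 2))) := by
  have hx : (1 : ℝ) < n + 2 := by linarith [n.cast_nonneg (α := ℝ)]
  refine ((hasSum_prime_pow_succ_iff fun m hm => ?_).2 (hasSum_vonMangoldt_div_rpow hx)).congr_fun
    fun ⟨p, k⟩ => ?_
  · rw [ArithmeticFunction.vonMangoldt_eq_zero_iff.2 hm, zero_div]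
  · rw [ArithmeticFunction.vonMangoldt_apply_pow k.succ_ne_zero,
      ArithmeticFunction.vonMangoldt_apply_prime p.2,
      show ((n : ℝ) + 2) = ((n + 2 : ℕ) : ℝ) by push_cast; ring, Real.rpow_natCast,
      Nat.cast_pow, ← pow_mul, inv_pow, div_eq_mul_inv]

noncomputable def sinCoeff (d : ℕ) : ℝ := 2 / √3 * sin ((d - 1) * π / 3)

lemma sinCoeff_one : sinCoeff 1 = 0 := by simp [sinCoeff]

lemma sinCoeff_two : sinCoeff 2 = 1 := by
  norm_num [sinCoeff, sin_pi_div_three]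

lemma sinCoeff_add_two (d : ℕ) : sinCoeff (d + 2) = sinCoeff (d + 1) - sinCoeff d := by
  have hadd := sin_add (d * π / 3) (π / 3)
  have hsub := sin_sub (d * π / 3) (π / 3)
  rw [cos_pi_div_three] at hadd hsub
  simp only [sinCoeff, Nat.cast_add, Nat.cast_ofNat, Nat.cast_one]
  rw [show ((d : ℝ) + 2 - 1) * π / 3 = d * π / 3 + π / 3 by ring,
    show ((d : ℝ) + 1 - 1) * π / 3 = d * π / 3 by ring,
    show ((d : ℝ) - 1) * π / 3 = d * π / 3 - π / 3 by ring, hadd, hsub]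
  ring

lemma abs_sinCoeff_le (d : ℕ) : |sinCoeff d| ≤ 2 := by
  have h3 : (1 : ℝ) ≤ √3 := Real.one_le_sqrt.mpr (by norm_num)
  have h : |2 / √3| ≤ 2 := by
    rw [abs_of_pos (by positivity), div_le_iff₀ (by positivity)]
    linarith
  rw [sinCoeff, abs_mul]
  simpa using mul_le_mul h (abs_sin_le_one _) (abs_nonneg _) zero_le_two

lemma summable_sinCoeff_add_mul_pow {y : ℝ} (hy : |y| < 1) (j : ℕ) :
    Summable (fun M : ℕ => sinCoeff (M + j) * y ^ M) :=
  .of_norm_bounded ((summable_geometric_of_lt_one (abs_nonneg y) hy).mul_left 2) fun M => by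
    rw [norm_mul, norm_pow, Real.norm_eq_abs, Real.norm_eq_abs]
    gcongr
    exact abs_sinCoeff_le _

lemma hasSum_sinCoeff_mul_pow {y : ℝ} (hy : |y| < 1) :
    HasSum (fun M : ℕ => sinCoeff (M + 1) * y ^ (M + 1)) (y ^ 2 / (1 - y + y ^ 2)) := by
  have hsum := summable_sinCoeff_add_mul_pow hy
  set U := ∑' M : ℕ, sinCoeff (M + 1) * y ^ M with hU_def
  set V := ∑' M : ℕ, sinCoeff (M + 2) * y ^ M with hV_def
  have hU : U = y * V := by
    rw [hU_def, (hsum 1).tsum_eq_zero_add, ← tsum_mul_left]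
    simp only [sinCoeff_one, zero_add, zero_mul, pow_succ]
    exact tsum_congr fun M => by ring
  have hV : V = 1 + y * (V - U) := by
    rw [hV_def, hU_def, ← (hsum 2).tsum_sub (hsum 1), (hsum 2).tsum_eq_zero_add,
      ← tsum_mul_left]
    simp only [sinCoeff_two, zero_add, pow_zero, one_mul, pow_succ]
    refine congrArg _ (tsum_congr fun M => ?_)
    rw [show M + 1 + 2 = M + 1 + 1 + 1 from rfl, sinCoeff_add_two]
    ring
  have hq : 0 < 1 - y + y ^ 2 := by nlinarith [sq_nonneg (y - 1 / 2)]
  have hV' : V = 1 / (1 - y + y ^ 2) := by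
    rw [eq_div_iff hq.ne']
    linear_combination hV - y * hU
  have hG : y ^ 2 / (1 - y + y ^ 2) = y * U := by
    rw [hU, hV']
    field_simp
  have hshift : (fun M : ℕ => sinCoeff (M + 1) * y ^ (M + 1))
      = fun M => y * (sinCoeff (M + 1) * y ^ M) := funext fun M => by ring
  rw [hG]
  exact hshift ▸ (hsum 1).hasSum.mul_left y

noncomputable def moebiusSinCoeff (n : ℕ) : ℝ := ∑ d ∈ n.divisors, sinCoeff d * μ (n / d)

lemma moebiusSinCoeff_one : moebiusSinCoeff 1 = 0 := by
  simp [moebiusSinCoeff, sinCoeff_one]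

lemma sum_divisors_moebiusSinCoeff {n : ℕ} (hn : 0 < n) :
    ∑ d ∈ n.divisors, moebiusSinCoeff d = sinCoeff n := by
  refine ArithmeticFunction.sum_eq_iff_sum_mul_moebius_eq.2 (fun m _ => ?_) n hn
  rw [Nat.sum_divisorsAntidiagonal' (f := fun a b => (μ a : ℝ) * sinCoeff b)]
  exact Finset.sum_congr rfl fun d _ => mul_comm _ _

lemma abs_moebiusSinCoeff_le (n : ℕ) : |moebiusSinCoeff n| ≤ 2 * n := by
  calc |moebiusSinCoeff n| ≤ ∑ d ∈ n.divisors, |sinCoeff d * μ (n / d)| :=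
        Finset.abs_sum_le_sum_abs _ _
    _ ≤ ∑ _d ∈ n.divisors, (2 : ℝ) := Finset.sum_le_sum fun d _ => by
        rw [abs_mul]
        have hμ : |(μ (n / d) : ℝ)| ≤ 1 := by exact_mod_cast ArithmeticFunction.abs_moebius_le_one
        simpa using mul_le_mul (abs_sinCoeff_le d) hμ (abs_nonneg _) zero_le_two
    _ ≤ 2 * n := by
        rw [Finset.sum_const, nsmul_eq_mul, mul_comm]
        gcongr
        exact_mod_cast Nat.card_divisors_le_self n

lemma hasSum_lambert_moebiusSinCoeff {y : ℝ} (hy : |y| < 1) :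
    HasSum (fun x : ℕ+ × ℕ+ => moebiusSinCoeff x.2 * y ^ (x.1 * x.2 : ℕ))
      (y ^ 2 / (1 - y + y ^ 2)) := by
  have hs : Summable (fun x : ℕ+ × ℕ+ => moebiusSinCoeff x.2 * y ^ (x.1 * x.2 : ℕ)) := by
    refine .of_norm_bounded ((summable_prod_mul_pow 1 (r := |y|) (by simpa)).mul_left 2)
      fun x => ?_
    rw [norm_mul, norm_pow, Real.norm_eq_abs, Real.norm_eq_abs, pow_one, ← mul_assoc]
    gcongr
    exact abs_moebiusSinCoeff_le x.2
  have hM : HasSum (fun M : ℕ+ => sinCoeff M * y ^ (M : ℕ)) (y ^ 2 / (1 - y + y ^ 2)) :=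
    Equiv.pnatEquivNat.symm.hasSum_iff.1 (hasSum_sinCoeff_mul_pow hy)
  have hinner (M : ℕ+) :
      ∑ x ∈ (M : ℕ).divisorsAntidiagonal, moebiusSinCoeff x.2 * y ^ (x.1 * x.2)
        = sinCoeff M * y ^ (M : ℕ) := by
    rw [Finset.sum_congr rfl fun x hx => by rw [(Nat.mem_divisorsAntidiagonal.1 hx).1],
      ← Finset.sum_mul, Nat.sum_divisorsAntidiagonal' (f := fun _ b => moebiusSinCoeff b),
      sum_divisors_moebiusSinCoeff M.pos]
  have hregroup := hs.hasSum.sum_divisorsAntidiagonal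
    (f := fun a b => moebiusSinCoeff b * y ^ (a * b))
  simp only [hinner] at hregroup
  rw [hM.unique hregroup]
  exact hs.hasSum

lemma inv_prime_le_half (p : Nat.Primes) : (p : ℝ)⁻¹ ≤ 1 / 2 := by
  rw [one_div]
  exact inv_anti₀ two_pos (by exact_mod_cast p.2.two_le)

lemma inv_prime_pow_le (p : Nat.Primes) (k n : ℕ) :
    ((p : ℝ)⁻¹) ^ ((k + 1) * (n + 2)) ≤ ((p : ℝ)⁻¹) ^ 2 * ((1 / 4) ^ k * (1 / 2) ^ n) := by
  have hy := inv_prime_le_half p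
  have hy0 : (0 : ℝ) ≤ (p : ℝ)⁻¹ := by positivity
  calc ((p : ℝ)⁻¹) ^ ((k + 1) * (n + 2)) ≤ ((p : ℝ)⁻¹) ^ (2 + 2 * k + n) :=
        pow_le_pow_of_le_one hy0 (hy.trans (by norm_num)) (by nlinarith)
    _ = ((p : ℝ)⁻¹) ^ 2 * ((((p : ℝ)⁻¹) ^ 2) ^ k * ((p : ℝ)⁻¹) ^ n) := by ring
    _ ≤ ((p : ℝ)⁻¹) ^ 2 * (((1 / 2) ^ 2) ^ k * (1 / 2) ^ n) := by gcongr
    _ = ((p : ℝ)⁻¹) ^ 2 * ((1 / 4) ^ k * (1 / 2) ^ n) := by norm_num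

noncomputable def lambertTerm (x : Nat.Primes × ℕ × ℕ) : ℝ :=
  Real.log x.1 * (moebiusSinCoeff (x.2.2 + 2) * ((x.1 : ℝ)⁻¹) ^ ((x.2.1 + 1) * (x.2.2 + 2)))

lemma summable_lambertTerm : Summable lambertTerm := by
  have hprimes : Summable (fun p : Nat.Primes => Real.log p * ((p : ℝ)⁻¹) ^ 2) :=
    (hasSum_log_mul_inv_pow 0).summable.comp_injective (i := fun p => (p, 0))
      fun p q h => congrArg Prod.fst h
  have hn : Summable (fun n : ℕ => 2 * ((n : ℝ) + 2) * (1 / 2) ^ n) := by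
    have h1 := summable_pow_mul_geometric_of_norm_lt_one 1 (r := (1 / 2 : ℝ)) (by norm_num)
    have h0 := summable_geometric_of_lt_one (r := (1 / 2 : ℝ)) (by norm_num) (by norm_num)
    exact ((h1.mul_left 2).add (h0.mul_left 4)).congr fun n => by ring
  have hkn := (summable_geometric_of_lt_one (r := (1 / 4 : ℝ)) (by norm_num)
    (by norm_num)).mul_of_nonneg hn (fun k => by positivity) (fun n => by positivity)
  have hlog (p : Nat.Primes) : 0 ≤ Real.log p := log_nonneg (by exact_mod_cast p.2.one_le)
  refine .of_norm_bounded (hprimes.mul_of_nonneg hkn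
    (fun p => mul_nonneg (hlog p) (by positivity)) (fun _ => by positivity)) fun ⟨p, k, n⟩ => ?_
  have hc : |moebiusSinCoeff (n + 2)| ≤ 2 * ((n : ℝ) + 2) := by
    exact_mod_cast abs_moebiusSinCoeff_le (n + 2)
  have hpow : 0 ≤ ((p : ℝ)⁻¹) ^ ((k + 1) * (n + 2)) := by positivity
  rw [Real.norm_eq_abs, lambertTerm, abs_mul, abs_mul, abs_of_nonneg (hlog p),
    abs_of_nonneg hpow]
  calc Real.log p * (|moebiusSinCoeff (n + 2)| * ((p : ℝ)⁻¹) ^ ((k + 1) * (n + 2)))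
      ≤ Real.log p * (2 * ((n : ℝ) + 2) * (((p : ℝ)⁻¹) ^ 2 * ((1 / 4) ^ k * (1 / 2) ^ n))) := by
        gcongr
        exact inv_prime_pow_le p k n
    _ = Real.log p * ((p : ℝ)⁻¹) ^ 2 * ((1 / 4) ^ k * (2 * ((n : ℝ) + 2) * (1 / 2) ^ n)) := by
        ring

lemma hasSum_lambertTerm_prime (p : Nat.Primes) :
    HasSum (fun kn : ℕ × ℕ => lambertTerm (p, kn)) (Real.log p / ((p : ℝ) ^ 2 - p + 1)) := by
  have hp : (0 : ℝ) < p := by exact_mod_cast p.2.pos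
  have hy : |(p : ℝ)⁻¹| < 1 := by
    rw [abs_of_pos (inv_pos.2 hp)]
    linarith [inv_prime_le_half p]
  have hval : Real.log p * (((p : ℝ)⁻¹) ^ 2 / (1 - (p : ℝ)⁻¹ + ((p : ℝ)⁻¹) ^ 2))
      = Real.log p / ((p : ℝ) ^ 2 - p + 1) := by
    field_simp
  have h := (hasSum_lambert_moebiusSinCoeff hy).mul_left (Real.log p)
  rw [hval] at h
  refine (Function.Injective.hasSum_iff
    (g := fun kn : ℕ × ℕ => (kn.1.succPNat, (kn.2 + 1).succPNat)) ?_ ?_).2 h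
  · rintro ⟨k, n⟩ ⟨k', n'⟩ h
    simp only [Prod.mk.injEq, Nat.succPNat_inj] at h
    exact Prod.ext h.1 (by omega)
  · rintro ⟨k, n⟩ hx
    have hn : (n : ℕ) = 1 := by
      by_contra hn
      refine hx ⟨(k.natPred, (n : ℕ) - 2), Prod.ext (by simp) (PNat.eq ?_)⟩
      simp only [Nat.succPNat_coe, Nat.succ_eq_add_one]
      have := n.pos
      omega
    simp [hn, moebiusSinCoeff_one]

lemma hasSum_lambertTerm_nat (n : ℕ) :
    HasSum (fun pk : Nat.Primes × ℕ => lambertTerm (pk.1, pk.2, n))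
      (-(zetaDerivR (n + 2) / zetaR (n + 2)) * moebiusSinCoeff (n + 2)) :=
  ((hasSum_log_mul_inv_pow n).mul_right _).congr_fun fun pk => by rw [lambertTerm]; ring

/-- `∑_{p prime} (log p)/(p² - p + 1)
  = -∑_{n ≥ 2} (ζ'(n)/ζ(n)) · ∑_{d∣n} (2/√3)·sin((d-1)π/3)·μ(n/d)`,
both series converging. -/
theorem statement4 :
    Summable
      (fun p : Nat.Primes =>
        Real.log ((p : ℕ) : ℝ) / (((p : ℕ) : ℝ) ^ 2 - ((p : ℕ) : ℝ) + 1)) ∧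
    HasSum
      (fun n : ℕ =>
        (zetaDerivR ((n : ℝ) + 2) / zetaR ((n : ℝ) + 2)) *
          ∑ d ∈ (n + 2).divisors,
            (2 / Real.sqrt 3) * Real.sin (((d : ℝ) - 1) * π / 3) *
              (ArithmeticFunction.moebius ((n + 2) / d) : ℝ))
      (-(∑' p : Nat.Primes,
          Real.log ((p : ℕ) : ℝ) / (((p : ℕ) : ℝ) ^ 2 - ((p : ℕ) : ℝ) + 1))) := by
  have hrows := summable_lambertTerm.hasSum.prod_fiberwise hasSum_lambertTerm_prime
  have hcols := (((Equiv.prodComm _ _).trans (Equiv.prodAssoc _ _ _)).hasSum_iff.2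
    summable_lambertTerm.hasSum).prod_fiberwise hasSum_lambertTerm_nat
  refine ⟨hrows.summable, ?_⟩
  rw [hrows.tsum_eq]
  have hneg := hcols.neg
  simp only [neg_mul, neg_neg] at hneg
  exact hneg
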